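/- For α ∈ (0,2] and even p > 2, the p-th moment of the slicer map, ⟨ΔX^p_n⟩ = Σ_{j=−n}^n A_j j^p, satisfies lim_{n→∞} ⟨ΔX^p_n⟩/n^γ = +∞ if 0 ≤ γ < p−α, = 2p/(p−α) if γ = p−α, and = 0 if γ > p−α; in particular ⟨ΔX^p_n⟩ ∼ n^{p−α}. -/

import Mathlib

/-!
From time `n` to time `n + 2` the coarse-grained distribution changes only at `|j| = n` and
`|j| = n + 2`, so `⟨ΔX^p_{n+2}⟩ - ⟨ΔX^p_n⟩ = 2 ℓ_{n+1} ((n + 2)^p - n^p) ∼ 4p n^{p-1-α}`.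
Summing these increments along each parity class, with `∑_{k<K} k^β ∼ K^{β+1}/(β+1)` by
comparison with `∫ x^β`, gives `⟨ΔX^p_n⟩ ∼ 2p/(p-α) · n^{p-α}`, from which the three regimes of
`γ` follow.
-/

open Filter

noncomputable def ella (α : ℝ) (m : ℤ) : ℝ :=
  (((|m| : ℤ) : ℝ) + (2:ℝ) ^ (1/α)) ^ (-α)

/-- The coarse-grained distribution of the slicer map `S_α` at time `n`:
`A_{±n} = ℓ_{n-1}`, `A_j = ℓ_{|j|-1} - ℓ_{|j|+1}` for `0 < |j| < n` with
`j ≡ n (mod 2)`, `A_0 = 2(ℓ_0 - ℓ_1)` for even `n`, and `A_j = 0` otherwise. -/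
noncomputable def Acg (α : ℝ) (n : ℕ) (j : ℤ) : ℝ :=
  if |j| = (n:ℤ) then ella α ((n:ℤ) - 1)
  else if j = 0 ∧ Even n then 2 * (ella α 0 - ella α 1)
  else if 0 < |j| ∧ |j| < (n:ℤ) ∧ j % 2 = (n:ℤ) % 2 then
    ella α (|j| - 1) - ella α (|j| + 1)
  else 0

/-- The mean square displacement (`p = 2`) and more generally the `p`-th moment of
the coarse-grained distribution. -/
noncomputable def momentCG (α : ℝ) (p : ℕ) (n : ℕ) : ℝ :=
  ∑ j ∈ Finset.Icc (-(n:ℤ)) (n:ℤ), Acg α n j * (j:ℝ) ^ p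

open Finset Topology Asymptotics

lemma tendsto_of_tendsto_even_odd {X : Type*} {f : ℕ → X} {l : Filter X}
    (h₀ : Tendsto (fun k => f (2 * k)) atTop l) (h₁ : Tendsto (fun k => f (2 * k + 1)) atTop l) :
    Tendsto f atTop l := by
  intro s hs
  obtain ⟨N₀, hN₀⟩ := eventually_atTop.1 (h₀ hs)
  obtain ⟨N₁, hN₁⟩ := eventually_atTop.1 (h₁ hs)
  refine eventually_atTop.2 ⟨2 * (N₀ + N₁) + 1, fun n hn => ?_⟩
  obtain ⟨k, rfl | rfl⟩ := Nat.even_or_odd' n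
  exacts [hN₀ k (by omega), hN₁ k (by omega)]

lemma tendsto_mul_add_div_natCast (a b : ℝ) :
    Tendsto (fun n : ℕ => (a * n + b) / n) atTop (𝓝 a) := by
  have h := (tendsto_const_div_atTop_nhds_zero_nat b).const_add a
  rw [add_zero] at h
  refine h.congr' ?_
  filter_upwards [eventually_ne_atTop 0] with n hn
  field_simp

section RiemannSum

variable {β : ℝ}

lemma sum_range_rpow_le (hβ : 0 ≤ β) (K : ℕ) :
    ∑ k ∈ range K, (k : ℝ) ^ β ≤ (K : ℝ) ^ (β + 1) / (β + 1) := by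
  have h := MonotoneOn.sum_le_integral (x₀ := 0) (a := K)
    ((Real.monotoneOn_rpow_Ici_of_exponent_nonneg hβ).mono Set.Icc_subset_Ici_self)
  rw [integral_rpow (Or.inl (by linarith))] at h
  simpa [Real.zero_rpow (by linarith : β + 1 ≠ 0)] using h

lemma le_sum_range_rpow_add (hβ : 0 ≤ β) (K : ℕ) :
    (K : ℝ) ^ (β + 1) / (β + 1) ≤ ∑ k ∈ range K, (k : ℝ) ^ β + (K : ℝ) ^ β := by
  have h := MonotoneOn.integral_le_sum (x₀ := 0) (a := K)
    ((Real.monotoneOn_rpow_Ici_of_exponent_nonneg hβ).mono Set.Icc_subset_Ici_self)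
  rw [integral_rpow (Or.inl (by linarith))] at h
  have hshift := sum_range_succ' (fun k : ℕ => (k : ℝ) ^ β) K
  rw [sum_range_succ] at hshift
  have h0 : (0 : ℝ) ≤ ((0 : ℕ) : ℝ) ^ β := by positivity
  simp only [zero_add, Nat.cast_add, Nat.cast_one] at h hshift
  rw [Real.zero_rpow (by linarith : β + 1 ≠ 0), sub_zero] at h
  linarith

lemma tendsto_sum_range_rpow_div (hβ : 0 ≤ β) :
    Tendsto (fun K : ℕ => (∑ k ∈ range K, (k : ℝ) ^ β) / (K : ℝ) ^ (β + 1)) atTop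
      (𝓝 (1 / (β + 1))) := by
  have hlower : Tendsto (fun K : ℕ => 1 / (β + 1) - 1 / (K : ℝ)) atTop (𝓝 (1 / (β + 1))) := by
    simpa using tendsto_const_nhds.sub (tendsto_const_div_atTop_nhds_zero_nat (1 : ℝ))
  refine tendsto_of_tendsto_of_tendsto_of_le_of_le' hlower tendsto_const_nhds ?_ ?_
  all_goals filter_upwards [eventually_gt_atTop 0] with K hK
  all_goals have hK' : (0 : ℝ) < K := by exact_mod_cast hK
  all_goals have hKβ : (K : ℝ) ^ (β + 1) = (K : ℝ) ^ β * K := by rw [Real.rpow_add_one hK'.ne']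
  · have h := le_sum_range_rpow_add hβ K
    have hpos : 0 < (K : ℝ) ^ β := by positivity
    rw [hKβ] at h ⊢
    rw [le_div_iff₀ (by positivity)]
    calc (1 / (β + 1) - 1 / (K : ℝ)) * ((K : ℝ) ^ β * K)
        = (K : ℝ) ^ β * K / (β + 1) - (K : ℝ) ^ β := by field_simp
      _ ≤ _ := by linarith
  · rw [div_le_div_iff₀ (by positivity) (by linarith)]
    have := sum_range_rpow_le hβ K
    rw [le_div_iff₀ (by linarith)] at this
    linarith

lemma tendsto_sum_range_rpow_atTop (hβ : 0 ≤ β) :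
    Tendsto (fun K : ℕ => ∑ k ∈ range K, (k : ℝ) ^ β) atTop atTop := by
  have hpow : Tendsto (fun K : ℕ => (K : ℝ) ^ (β + 1)) atTop atTop :=
    (tendsto_rpow_atTop (by linarith)).comp tendsto_natCast_atTop_atTop
  refine ((tendsto_sum_range_rpow_div hβ).pos_mul_atTop (by positivity) hpow).congr' ?_
  filter_upwards [eventually_gt_atTop 0] with K hK
  have : (0 : ℝ) < (K : ℝ) ^ (β + 1) := by positivity
  field_simp

end RiemannSum

lemma tendsto_sum_range_div_rpow {b : ℕ → ℝ} {β c : ℝ} (hβ : 0 ≤ β)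
    (hb : Tendsto (fun k : ℕ => b k / (k : ℝ) ^ β) atTop (𝓝 c)) :
    Tendsto (fun K : ℕ => (∑ k ∈ range K, b k) / (K : ℝ) ^ (β + 1)) atTop (𝓝 (c / (β + 1))) := by
  have hpos : ∀ᶠ k : ℕ in atTop, (0 : ℝ) < (k : ℝ) ^ β := by
    filter_upwards [eventually_gt_atTop 0] with k hk using by positivity
  have herr : (fun k : ℕ => b k - c * (k : ℝ) ^ β) =o[atTop] fun k : ℕ => (k : ℝ) ^ β := by
    rw [isLittleO_iff_tendsto' (hpos.mono fun k hk h => absurd h hk.ne')]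
    have h0 : Tendsto (fun k : ℕ => b k / (k : ℝ) ^ β - c) atTop (𝓝 0) := by
      simpa using hb.sub_const c
    refine h0.congr' ?_
    filter_upwards [hpos] with k hk
    field_simp
  have hsum_le : (fun K : ℕ => ∑ k ∈ range K, (k : ℝ) ^ β) =O[atTop]
      fun K : ℕ => (K : ℝ) ^ (β + 1) := by
    refine IsBigO.of_bound 1 (Eventually.of_forall fun K => ?_)
    rw [Real.norm_of_nonneg (by positivity), Real.norm_of_nonneg (by positivity), one_mul]
    exact (sum_range_rpow_le hβ K).trans (div_le_self (by positivity) (by linarith))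
  have hsmall := ((herr.sum_range (fun k => by positivity)
    (tendsto_sum_range_rpow_atTop hβ)).trans_isBigO hsum_le).tendsto_div_nhds_zero
  have hmain := hsmall.add ((tendsto_sum_range_rpow_div hβ).const_mul c)
  rw [zero_add, mul_one_div] at hmain
  refine hmain.congr fun K => ?_
  rw [sum_sub_distrib, ← mul_sum]
  ring

section StolzCesaro

variable {M : ℕ → ℝ} {β c : ℝ}

lemma tendsto_div_rpow_two_mul_add (hβ : 0 ≤ β)
    (h : Tendsto (fun n : ℕ => (M (n + 2) - M n) / (n : ℝ) ^ β) atTop (𝓝 c)) (r : ℕ) :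
    Tendsto (fun K : ℕ => M (2 * K + r) / ((2 * K + r : ℕ) : ℝ) ^ (β + 1))
      atTop (𝓝 (c / (2 * (β + 1)))) := by
  have hratio : ∀ γ : ℝ, 0 ≤ γ → Tendsto (fun k : ℕ => (((2 * k + r : ℕ) : ℝ) / k) ^ γ)
      atTop (𝓝 (2 ^ γ)) := fun γ hγ => by
    push_cast
    exact (tendsto_mul_add_div_natCast 2 r).rpow_const (Or.inr hγ)
  have hstep : Tendsto (fun k : ℕ => (M (2 * k + r + 2) - M (2 * k + r)) / (k : ℝ) ^ β)
      atTop (𝓝 (c * 2 ^ β)) := by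
    have hsub : Tendsto (fun k : ℕ => 2 * k + r) atTop atTop :=
      tendsto_atTop_mono (fun k => show k ≤ 2 * k + r by omega) tendsto_id
    refine ((h.comp hsub).mul (hratio β hβ)).congr' ?_
    filter_upwards [eventually_gt_atTop 0] with k hk
    have hk' : (0 : ℝ) < k := by exact_mod_cast hk
    rw [Function.comp_apply, Real.div_rpow (by positivity) hk'.le]
    have : (0 : ℝ) < ((2 * k + r : ℕ) : ℝ) ^ β := by positivity
    field_simp
  have htel : ∀ K : ℕ, M (2 * K + r) =
      M r + ∑ k ∈ range K, (M (2 * k + r + 2) - M (2 * k + r)) := fun K => by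
    have := sum_range_sub (fun k => M (2 * k + r)) K
    simp only [mul_add, mul_one, add_right_comm _ 2 r, mul_zero, zero_add] at this
    rw [this, add_sub_cancel]
  have hconst : Tendsto (fun K : ℕ => M r / (K : ℝ) ^ (β + 1)) atTop (𝓝 0) :=
    tendsto_const_nhds.div_atTop
      ((tendsto_rpow_atTop (by linarith)).comp tendsto_natCast_atTop_atTop)
  have hK := (hconst.add (tendsto_sum_range_div_rpow hβ hstep)).div
    (hratio (β + 1) (by linarith)) (by positivity)
  rw [show (0 + c * 2 ^ β / (β + 1)) / 2 ^ (β + 1) = c / (2 * (β + 1)) by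
    rw [Real.rpow_add_one two_ne_zero, zero_add]; field_simp] at hK
  refine hK.congr' ?_
  filter_upwards [eventually_gt_atTop 0] with K hK
  have hK' : (0 : ℝ) < K := by exact_mod_cast hK
  simp only [Pi.div_apply]
  rw [htel K, Real.div_rpow (by positivity) hK'.le]
  have : (0 : ℝ) < (K : ℝ) ^ (β + 1) := by positivity
  have : (0 : ℝ) < ((2 * K + r : ℕ) : ℝ) ^ (β + 1) := by positivity
  field_simp

lemma tendsto_div_rpow_of_tendsto_sub_div_rpow (hβ : 0 ≤ β)
    (h : Tendsto (fun n : ℕ => (M (n + 2) - M n) / (n : ℝ) ^ β) atTop (𝓝 c)) :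
    Tendsto (fun n : ℕ => M n / (n : ℝ) ^ (β + 1)) atTop (𝓝 (c / (2 * (β + 1)))) :=
  tendsto_of_tendsto_even_odd (tendsto_div_rpow_two_mul_add hβ h 0)
    (tendsto_div_rpow_two_mul_add hβ h 1)

end StolzCesaro

-- The quotient is the difference quotient of `t ↦ (1 + a t) ^ p` at `0` with step `1 / x`.
lemma tendsto_add_pow_sub_pow_div (a : ℝ) {p : ℕ} (hp : p ≠ 0) :
    Tendsto (fun x : ℝ => ((x + a) ^ p - x ^ p) / x ^ (p - 1)) atTop (𝓝 (a * p)) := by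
  have hderiv : HasDerivAt (fun t : ℝ => (1 + a * t) ^ p) (a * p) 0 := by
    simpa [mul_comm] using (((hasDerivAt_id (0 : ℝ)).const_mul a).const_add 1).fun_pow p
  refine (hderiv.tendsto_slope_zero_right.comp tendsto_inv_atTop_nhdsGT_zero).congr' ?_
  filter_upwards [eventually_gt_atTop 0] with x hx
  obtain ⟨q, rfl⟩ := Nat.exists_eq_succ_of_ne_zero hp
  simp only [Function.comp_apply, inv_inv, zero_add, mul_zero, add_zero, one_pow, smul_eq_mul,
    Nat.succ_sub_one]
  rw [show 1 + a * x⁻¹ = (x + a) / x by field_simp, div_pow, pow_succ x q]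
  field_simp

section Exponents

variable {u : ℕ → ℝ} {δ γ L : ℝ}

lemma div_rpow_eq_div_rpow_mul_rpow_sub {n : ℕ} (hn : 0 < n) (x : ℝ) :
    x / (n : ℝ) ^ γ = x / (n : ℝ) ^ δ * (n : ℝ) ^ (δ - γ) := by
  have hn' : (0 : ℝ) < n := by exact_mod_cast hn
  rw [Real.rpow_sub hn']
  have : (0 : ℝ) < (n : ℝ) ^ δ := by positivity
  field_simp

lemma tendsto_div_rpow_atTop_of_lt (hu : Tendsto (fun n : ℕ => u n / (n : ℝ) ^ δ) atTop (𝓝 L))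
    (hL : 0 < L) (hγ : γ < δ) : Tendsto (fun n : ℕ => u n / (n : ℝ) ^ γ) atTop atTop := by
  have hpow : Tendsto (fun n : ℕ => (n : ℝ) ^ (δ - γ)) atTop atTop :=
    (tendsto_rpow_atTop (by linarith)).comp tendsto_natCast_atTop_atTop
  refine (hu.pos_mul_atTop hL hpow).congr' ?_
  filter_upwards [eventually_gt_atTop 0] with n hn
  exact (div_rpow_eq_div_rpow_mul_rpow_sub hn _).symm

lemma tendsto_div_rpow_zero_of_lt (hu : Tendsto (fun n : ℕ => u n / (n : ℝ) ^ δ) atTop (𝓝 L))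
    (hγ : δ < γ) : Tendsto (fun n : ℕ => u n / (n : ℝ) ^ γ) atTop (𝓝 0) := by
  have hpow : Tendsto (fun n : ℕ => (n : ℝ) ^ (δ - γ)) atTop (𝓝 0) := by
    have h := (tendsto_rpow_neg_atTop (by linarith : 0 < γ - δ)).comp tendsto_natCast_atTop_atTop
    rwa [neg_sub] at h
  have h := hu.mul hpow
  rw [mul_zero] at h
  refine h.congr' ?_
  filter_upwards [eventually_gt_atTop 0] with n hn
  exact (div_rpow_eq_div_rpow_mul_rpow_sub hn _).symm

end Exponents

lemma tendsto_ella_mul_rpow (α : ℝ) (c : ℕ) :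
    Tendsto (fun n : ℕ => ella α (n + c) * (n : ℝ) ^ α) atTop (𝓝 1) := by
  have h := (tendsto_mul_add_div_natCast 1 (c + 2 ^ (1 / α))).rpow_const (p := -α)
    (Or.inl one_ne_zero)
  rw [Real.one_rpow] at h
  refine h.congr' ?_
  filter_upwards [eventually_gt_atTop 0] with n hn
  have hn' : (0 : ℝ) < n := by exact_mod_cast hn
  have hcast : (((|(n : ℤ) + c| : ℤ) : ℝ)) = n + c := by
    rw [abs_of_nonneg (by positivity)]; push_cast; ring
  rw [ella, hcast, Real.div_rpow (by positivity) hn'.le, Real.rpow_neg hn'.le, div_inv_eq_mul]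
  ring_nf

section CoarseGrained

variable (α : ℝ) {n : ℕ} {j : ℤ}

lemma Acg_eq_zero_of_lt_abs (h : (n : ℤ) < |j|) : Acg α n j = 0 := by
  have h0 : j ≠ 0 := by rintro rfl; simp at h; omega
  simp [Acg, h0, h.ne', h.not_gt]

lemma Acg_of_abs_eq (h : |j| = n) : Acg α n j = ella α (n - 1) := if_pos h

lemma Acg_add_two_of_abs_lt (h : |j| < n) : Acg α (n + 2) j = Acg α n j := by
  have heven : Even (n + 2) ↔ Even n := by simp [Nat.even_add]
  have hmid : (0 < |j| ∧ |j| < ((n + 2 : ℕ) : ℤ) ∧ j % 2 = ((n + 2 : ℕ) : ℤ) % 2) ↔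
      (0 < |j| ∧ |j| < n ∧ j % 2 = (n : ℤ) % 2) := by
    push_cast; omega
  simp only [Acg, heven, hmid]
  rw [if_neg (by push_cast; omega), if_neg h.ne]

lemma Acg_add_two_of_abs_eq (h : |j| = n) (hn : 0 < n) :
    Acg α (n + 2) j = ella α (n - 1) - ella α (n + 1) := by
  have hpar : j % 2 = (n : ℤ) % 2 := by rcases abs_cases j with ⟨h', _⟩ | ⟨h', _⟩ <;> omega
  rw [Acg, if_neg (by push_cast; omega), if_neg (by rintro ⟨rfl, _⟩; simp at h; omega),
    if_pos (by push_cast; omega), h]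

lemma Acg_add_two_of_abs_eq_add_one (h : |j| = n + 1) : Acg α (n + 2) j = 0 := by
  have hpar : j % 2 ≠ (n + 2 : ℤ) % 2 := by
    rcases abs_cases j with ⟨h', _⟩ | ⟨h', _⟩ <;> omega
  rw [Acg, if_neg (by push_cast; omega), if_neg (by rintro ⟨rfl, _⟩; simp at h; omega),
    if_neg (by push_cast; omega)]

end CoarseGrained

-- For `n = 0` the two distributions also differ at `j = 0`, which the weight `0 ^ p` hides.
lemma Acg_add_two_sub_mul_pow (α : ℝ) {p : ℕ} (hp : Even p) (hp0 : p ≠ 0) (n : ℕ) (j : ℤ) :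
    (Acg α (n + 2) j - Acg α n j) * (j : ℝ) ^ p = ella α (n + 1) *
      ((if |j| = n + 2 then ((n : ℝ) + 2) ^ p else 0) - (if |j| = n then (n : ℝ) ^ p else 0)) := by
  obtain ⟨m, hm⟩ : ∃ m : ℕ, |j| = m := ⟨j.natAbs, Int.abs_eq_natAbs j⟩
  have hpow : (j : ℝ) ^ p = (m : ℝ) ^ p := by
    rw [← hp.pow_abs, ← Int.cast_abs, hm, Int.cast_natCast]
  rw [hpow, hm]
  rcases (by omega : m < n ∨ m = n ∨ m = n + 1 ∨ m = n + 2 ∨ n + 2 < m) with h | rfl | rfl | rfl | h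
  · rw [Acg_add_two_of_abs_lt α (by omega), if_neg (by omega), if_neg (by omega)]
    ring
  · rcases Nat.eq_zero_or_pos m with rfl | hm0
    · simp [zero_pow hp0]
    · rw [Acg_add_two_of_abs_eq α hm hm0, Acg_of_abs_eq α hm, if_neg (by omega), if_pos rfl]
      ring
  · rw [Acg_add_two_of_abs_eq_add_one α (by omega),
      Acg_eq_zero_of_lt_abs α (by omega), if_neg (by omega), if_neg (by omega)]
    ring
  · rw [Acg_of_abs_eq α (by push_cast; omega), Acg_eq_zero_of_lt_abs α (by omega),
      if_pos (by push_cast; ring), if_neg (by omega)]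
    push_cast
    ring_nf
  · rw [Acg_eq_zero_of_lt_abs α (by omega), Acg_eq_zero_of_lt_abs α (by omega),
      if_neg (by omega), if_neg (by omega)]
    ring

lemma sum_Icc_ite_abs_eq_two_mul {p N m : ℕ} (hp0 : p ≠ 0) (hm : m ≤ N) :
    ∑ j ∈ Icc (-(N : ℤ)) N, (if |j| = m then (m : ℝ) ^ p else 0) = 2 * (m : ℝ) ^ p := by
  rcases Nat.eq_zero_or_pos m with rfl | hm0
  · simp [zero_pow hp0]
  rw [← sum_filter, sum_const, nsmul_eq_mul]
  have hfilter : ({j ∈ Icc (-(N : ℤ)) N | |j| = (m : ℤ)} : Finset ℤ) = {-(m : ℤ), (m : ℤ)} := by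
    ext j
    simp only [mem_filter, mem_Icc, mem_insert, mem_singleton]
    rcases abs_cases j with ⟨h, _⟩ | ⟨h, _⟩ <;> omega
  rw [hfilter, card_pair (by omega)]
  norm_num

lemma momentCG_add_two (α : ℝ) {p : ℕ} (hp : Even p) (hp0 : p ≠ 0) (n : ℕ) :
    momentCG α p (n + 2) - momentCG α p n =
      2 * ella α (n + 1) * (((n : ℝ) + 2) ^ p - (n : ℝ) ^ p) := by
  have hextend : momentCG α p n =
      ∑ j ∈ Icc (-((n + 2 : ℕ) : ℤ)) (n + 2 : ℕ), Acg α n j * (j : ℝ) ^ p := by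
    refine sum_subset (Icc_subset_Icc (by omega) (by omega)) fun j hj hj' => ?_
    rw [Acg_eq_zero_of_lt_abs α, zero_mul]
    simp only [mem_Icc, not_and_or, not_le] at hj hj'
    rcases abs_cases j with ⟨h, _⟩ | ⟨h, _⟩ <;> omega
  rw [momentCG, hextend, ← sum_sub_distrib]
  simp only [← sub_mul, Acg_add_two_sub_mul_pow α hp hp0, ← mul_sum, sum_sub_distrib]
  have h2 := sum_Icc_ite_abs_eq_two_mul (p := p) (N := n + 2) (m := n + 2) hp0 le_rfl
  have h0 := sum_Icc_ite_abs_eq_two_mul (p := p) (N := n + 2) (m := n) hp0 (by omega)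
  push_cast at h2 h0 ⊢
  rw [h2, h0]
  ring

lemma tendsto_momentCG_add_two_sub_div_rpow (α : ℝ) {p : ℕ} (hp : Even p) (hp0 : p ≠ 0) :
    Tendsto (fun n : ℕ => (momentCG α p (n + 2) - momentCG α p n) / (n : ℝ) ^ ((p : ℝ) - 1 - α))
      atTop (𝓝 (4 * p)) := by
  have hell : Tendsto (fun n : ℕ => ella α (n + 1) * (n : ℝ) ^ α) atTop (𝓝 1) := by
    simpa using tendsto_ella_mul_rpow α 1
  have h := (hell.const_mul 2).mul
    ((tendsto_add_pow_sub_pow_div 2 hp0).comp tendsto_natCast_atTop_atTop)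
  rw [show 2 * 1 * (2 * (p : ℝ)) = 4 * p by ring] at h
  refine h.congr' ?_
  filter_upwards [eventually_gt_atTop 0] with n hn
  have hn' : (0 : ℝ) < n := by exact_mod_cast hn
  have hexp : (n : ℝ) ^ ((p : ℝ) - 1 - α) = (n : ℝ) ^ (p - 1) / (n : ℝ) ^ α := by
    rw [Real.rpow_sub hn', ← Real.rpow_natCast, Nat.cast_pred (Nat.pos_of_ne_zero hp0)]
  rw [momentCG_add_two α hp hp0, hexp, Function.comp_apply]
  have : (0 : ℝ) < (n : ℝ) ^ α := by positivity
  have : (0 : ℝ) < (n : ℝ) ^ (p - 1) := by positivity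
  field_simp

/-- for `α ∈ (0,2]` and even `p > 2`, the `p`-th moment
`⟨ΔX^p_n⟩ = Σ_{j=-n}^n A_j j^p` satisfies `⟨ΔX^p_n⟩/n^γ → ∞` if `0 ≤ γ < p-α`,
`→ 2p/(p-α)` if `γ = p-α`, and `→ 0` if `γ > p-α`; in particular
`⟨ΔX^p_n⟩ ∼ n^{p-α}`. -/
theorem moment_limit (α : ℝ) (hα : α ∈ Set.Ioc (0:ℝ) 2)
    (p : ℕ) (hp : Even p) (hp2 : 2 < p) :
    (∀ γ : ℝ, 0 ≤ γ → γ < (p:ℝ) - α →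
      Tendsto (fun n : ℕ => momentCG α p n / (n:ℝ)^γ) atTop atTop) ∧
    Tendsto (fun n : ℕ => momentCG α p n / (n:ℝ)^((p:ℝ) - α))
      atTop (nhds (2 * p / ((p:ℝ) - α))) ∧
    (∀ γ : ℝ, (p:ℝ) - α < γ →
      Tendsto (fun n : ℕ => momentCG α p n / (n:ℝ)^γ) atTop (nhds 0)) := by
  have hp3 : (3 : ℝ) ≤ p := by exact_mod_cast hp2
  have hlim := tendsto_div_rpow_of_tendsto_sub_div_rpow (by linarith [hα.2])
    (tendsto_momentCG_add_two_sub_div_rpow α hp (by omega))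
  rw [show (p : ℝ) - 1 - α + 1 = p - α by ring,
    show 4 * (p : ℝ) / (2 * (p - α)) = 2 * p / (p - α) by field_simp; ring] at hlim
  have hL : 0 < 2 * (p : ℝ) / (p - α) := div_pos (by linarith) (by linarith [hα.2])
  exact ⟨fun γ _ hγ => tendsto_div_rpow_atTop_of_lt hlim hL hγ, hlim,
    fun γ hγ => tendsto_div_rpow_zero_of_lt hlim hγ⟩
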